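/- (Theorem 1.) Let M ∈ ℝ^{l×l} be nonsingular and f ∈ ℝ^l. Suppose Q̃, R̃ ∈ ℝ^{l×l} satisfy ‖M − Q̃R̃‖₂ ≤ α‖M‖₂ with α·κ(M) < 1, and ‖I − Q̃ᵀQ̃‖₂ ≤ β < 1. Suppose moreover there exist ΔR, ΔQ ∈ ℝ^{l×l} and z̃ ∈ ℝ^l such that (R̃ + ΔR) z̃ = (Q̃ + ΔQ)ᵀ f, with ‖ΔR‖₂ ≤ γ‖R̃‖₂ and ‖ΔQ‖₂ ≤ δ‖Q̃‖₂. Then there exist ΔM ∈ ℝ^{l×l} and Δf ∈ ℝ^l such that (M + ΔM) z̃ = f + Δf, ‖ΔM‖₂ ≤ μ‖M‖₂ and ‖Δf‖₂ ≤ ν‖f‖₂, where μ = α + γ(1+α)√((1+β)/(1−β)) and ν = β + δ(1+β). -/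

import Mathlib

/-!
Write `ΔM = Q̃ ΔR - (M - Q̃ R̃)` and `Δf = (Q̃ Q̃ᵀ - I + Q̃ ΔQᵀ) f`; then `M + ΔM = Q̃ (R̃ + ΔR)`
and `Q̃ (Q̃ + ΔQ)ᵀ = I + (Q̃ Q̃ᵀ - I + Q̃ ΔQᵀ)`, so the perturbed system holds. The bounds come
from the near-orthogonality of `Q̃`: the C⋆-identity `‖Q̃‖² = ‖Q̃ᵀQ̃‖` and the Neumann series
for `(Q̃ᵀQ̃)⁻¹ = Q̃⁻¹Q̃⁻ᵀ` give `‖Q̃‖² ≤ 1 + β` and `‖Q̃⁻¹‖² ≤ 1/(1 - β)`, hence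
`κ(Q̃) ≤ √((1 + β)/(1 - β))`. Finally `I - Q̃Q̃ᵀ = Q̃ (I - Q̃ᵀQ̃) Q̃⁻¹` is symmetric, so its
norm equals its spectral radius, which conjugation preserves and which is at most
`‖I - Q̃ᵀQ̃‖ ≤ β`.
-/

open scoped Matrix.Norms.L2Operator
open Matrix

theorem le_of_forall_pow_two_pow_le_mul_pow_two_pow {x b C : ℝ} (hb : 0 ≤ b)
    (h : ∀ n : ℕ, x ^ 2 ^ n ≤ C * b ^ 2 ^ n) : x ≤ b := by
  by_contra! hbx
  rcases hb.eq_or_lt with rfl | hb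
  · have h0 := h 0
    norm_num at h0
    linarith
  · have hr : 1 < x / b := (one_lt_div hb).mpr hbx
    obtain ⟨n, hn⟩ := pow_unbounded_of_one_lt C hr
    have hpow : (x / b) ^ n ≤ (x / b) ^ 2 ^ n := pow_le_pow_right₀ hr.le Nat.lt_two_pow_self.le
    have hC : (x / b) ^ 2 ^ n ≤ C := by
      rw [div_pow, div_le_iff₀ (by positivity)]
      exact h n
    linarith

theorem norm_mul_sub_sub_le {E : Type*} [NormedRing E] (u : Eˣ) {M R ΔR : E} {α γ κ : ℝ}
    (hα : ‖M - u * R‖ ≤ α * ‖M‖) (hΔR : ‖ΔR‖ ≤ γ * ‖R‖) (hγ : 0 ≤ γ)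
    (hκ : ‖(u : E)‖ * ‖(↑u⁻¹ : E)‖ ≤ κ) :
    ‖u * ΔR - (M - u * R)‖ ≤ (α + γ * (1 + α) * κ) * ‖M‖ := by
  have huR : ‖u * R‖ ≤ (1 + α) * ‖M‖ := by
    linarith [norm_le_norm_add_norm_sub' (u * R) M, norm_sub_rev (u * R) M]
  have hR : ‖(u : E)‖ * ‖R‖ ≤ κ * ‖u * R‖ := by
    calc ‖(u : E)‖ * ‖R‖ = ‖(u : E)‖ * ‖↑u⁻¹ * (u * R)‖ := by rw [Units.inv_mul_cancel_left]
      _ ≤ ‖(u : E)‖ * (‖(↑u⁻¹ : E)‖ * ‖u * R‖) := by gcongr; exact norm_mul_le _ _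
      _ ≤ κ * ‖u * R‖ := by
        rw [← mul_assoc]
        exact mul_le_mul_of_nonneg_right hκ (norm_nonneg _)
  have hκ0 : 0 ≤ κ := le_trans (by positivity) hκ
  calc ‖u * ΔR - (M - u * R)‖ ≤ ‖(u : E)‖ * ‖ΔR‖ + α * ‖M‖ :=
        (norm_sub_le _ _).trans (add_le_add (norm_mul_le _ _) hα)
    _ ≤ γ * (‖(u : E)‖ * ‖R‖) + α * ‖M‖ := by
      nlinarith [norm_nonneg (u : E)]
    _ ≤ γ * (κ * ((1 + α) * ‖M‖)) + α * ‖M‖ := by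
      gcongr γ * ?_ + _
      exact hR.trans (mul_le_mul_of_nonneg_left huR hκ0)
    _ = (α + γ * (1 + α) * κ) * ‖M‖ := by ring

section CStarRing

variable {E : Type*} [NormedRing E] [StarRing E] [CStarRing E]

theorem IsSelfAdjoint.norm_conj_le {u : Eˣ} {a : E} (h : IsSelfAdjoint (↑u * a * ↑u⁻¹)) :
    ‖(↑u * a * ↑u⁻¹ : E)‖ ≤ ‖a‖ := by
  refine le_of_forall_pow_two_pow_le_mul_pow_two_pow (C := ‖(u : E)‖ * ‖(↑u⁻¹ : E)‖)
    (norm_nonneg a) fun n => ?_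
  rw [← h.norm_pow_two_pow, Units.conj_pow]
  calc ‖↑u * a ^ 2 ^ n * ↑u⁻¹‖ ≤ ‖(u : E)‖ * ‖a ^ 2 ^ n‖ * ‖(↑u⁻¹ : E)‖ := norm_mul₃_le
    _ ≤ ‖(u : E)‖ * ‖a‖ ^ 2 ^ n * ‖(↑u⁻¹ : E)‖ := by
      gcongr
      exact norm_pow_le' a (by positivity)
    _ = ‖(u : E)‖ * ‖(↑u⁻¹ : E)‖ * ‖a‖ ^ 2 ^ n := by ring

theorem norm_one_sub_mul_star_le (u : Eˣ) :
    ‖1 - (u : E) * star (u : E)‖ ≤ ‖1 - star (u : E) * u‖ := by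
  have hconj : 1 - (u : E) * star (u : E) = ↑u * (1 - star (u : E) * u) * ↑u⁻¹ := by
    simp only [mul_sub, sub_mul, mul_one, mul_assoc, Units.mul_inv]
  have hsa : IsSelfAdjoint (↑u * (1 - star (u : E) * u) * ↑u⁻¹) :=
    hconj ▸ (IsSelfAdjoint.one E).sub (.mul_star_self _)
  rw [hconj]
  exact hsa.norm_conj_le

theorem norm_mul_norm_le_one_add_norm_one_sub_star_mul_self [Nontrivial E] (a : E) :
    ‖a‖ * ‖a‖ ≤ 1 + ‖1 - star a * a‖ := by
  rw [← CStarRing.norm_star_mul_self, norm_sub_rev, ← norm_one (α := E)]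
  exact norm_le_norm_add_norm_sub' (star a * a) 1

theorem norm_inv_mul_norm_inv_le [Nontrivial E] [CompleteSpace E] (u : Eˣ)
    (h : ‖1 - star (u : E) * u‖ < 1) :
    ‖(↑u⁻¹ : E)‖ * ‖(↑u⁻¹ : E)‖ ≤ (1 - ‖1 - star (u : E) * u‖)⁻¹ := by
  set t := 1 - star (u : E) * u
  have hunit : Units.oneSub t h = star u * u := Units.ext (by simp [t])
  have hinv : (↑u⁻¹ : E) * star (↑u⁻¹ : E) = ∑' n : ℕ, t ^ n := by
    have hsum : (↑(Units.oneSub t h)⁻¹ : E) = ∑' n : ℕ, t ^ n := rfl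
    rw [← hsum, hunit, _root_.mul_inv_rev, Units.val_mul, Units.coe_star_inv]
  rw [← CStarRing.norm_self_mul_star, hinv]
  simpa using tsum_geometric_le_of_norm_lt_one t h

theorem norm_mul_norm_inv_le_sqrt [Nontrivial E] [CompleteSpace E] (u : Eˣ) {β : ℝ}
    (hβ : ‖1 - star (u : E) * u‖ ≤ β) (hβ1 : β < 1) :
    ‖(u : E)‖ * ‖(↑u⁻¹ : E)‖ ≤ Real.sqrt ((1 + β) / (1 - β)) := by
  apply Real.le_sqrt_of_sq_le
  have hu := norm_mul_norm_le_one_add_norm_one_sub_star_mul_self (u : E)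
  have hinv := norm_inv_mul_norm_inv_le u (hβ.trans_lt hβ1)
  have hβinv : (1 - ‖1 - star (u : E) * u‖)⁻¹ ≤ (1 - β)⁻¹ :=
    inv_anti₀ (by linarith) (by linarith)
  calc (‖(u : E)‖ * ‖(↑u⁻¹ : E)‖) ^ 2
        = (‖(u : E)‖ * ‖(u : E)‖) * (‖(↑u⁻¹ : E)‖ * ‖(↑u⁻¹ : E)‖) := by ring
    _ ≤ (1 + β) * (1 - β)⁻¹ :=
      mul_le_mul (by linarith) (hinv.trans hβinv) (by positivity)
        (by linarith [(norm_nonneg _).trans hβ])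
    _ = (1 + β) / (1 - β) := (div_eq_mul_inv _ _).symm

theorem norm_mul_star_sub_one_add_mul_star_le [Nontrivial E] (u : Eˣ) {ΔQ : E} {β δ : ℝ}
    (hβ : ‖1 - star (u : E) * u‖ ≤ β) (hΔQ : ‖ΔQ‖ ≤ δ * ‖(u : E)‖) :
    ‖((u : E) * star (u : E) - 1) + u * star ΔQ‖ ≤ β + δ * (1 + β) := by
  have hu := u.norm_pos
  have hδ : 0 ≤ δ := nonneg_of_mul_nonneg_left ((norm_nonneg ΔQ).trans hΔQ) hu
  have hsq := norm_mul_norm_le_one_add_norm_one_sub_star_mul_self (u : E)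
  calc ‖((u : E) * star (u : E) - 1) + u * star ΔQ‖
      ≤ ‖1 - (u : E) * star (u : E)‖ + ‖(u : E)‖ * ‖ΔQ‖ := by
        rw [← norm_sub_rev, ← norm_star ΔQ]
        exact (norm_add_le _ _).trans (add_le_add_right (norm_mul_le _ _) _)
    _ ≤ β + δ * (‖(u : E)‖ * ‖(u : E)‖) := by
      nlinarith [norm_one_sub_mul_star_le u]
    _ ≤ β + δ * (1 + β) := by gcongr; linarith

end CStarRing

theorem Matrix.mulVec_eq_of_perturbed_qr_solve {m n k α : Type*} [Fintype n] [Fintype k]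
    [Fintype m] [DecidableEq m] [CommRing α] {M : Matrix m k α} {Q ΔQ : Matrix m n α}
    {R ΔR : Matrix n k α} {z : k → α} {f : m → α} (h : (R + ΔR) *ᵥ z = (Q + ΔQ)ᵀ *ᵥ f) :
    (M + (Q * ΔR - (M - Q * R))) *ᵥ z = f + ((Q * Qᵀ - 1) + Q * ΔQᵀ) *ᵥ f := by
  have hM : M + (Q * ΔR - (M - Q * R)) = Q * (R + ΔR) := by rw [Matrix.mul_add]; abel
  have hQ : Q * (Q + ΔQ)ᵀ = 1 + ((Q * Qᵀ - 1) + Q * ΔQᵀ) := by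
    rw [transpose_add, Matrix.mul_add]; abel
  rw [hM, ← mulVec_mulVec, h, mulVec_mulVec, hQ, add_mulVec, one_mulVec]

theorem Matrix.isUnit_of_norm_one_sub_transpose_mul_self_lt_one {n : Type*} [Fintype n]
    [DecidableEq n] {Q : Matrix n n ℝ} (h : ‖1 - Qᵀ * Q‖ < 1) : IsUnit Q := by
  obtain ⟨v, hv⟩ := sub_sub_cancel (1 : Matrix n n ℝ) (Qᵀ * Q) ▸ isUnit_one_sub_of_norm_lt_one h
  refine (isUnit_iff_isUnit_det Q).mpr
    (isUnit_det_of_left_inverse (B := (↑v⁻¹ : Matrix n n ℝ) * Qᵀ) ?_)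
  rw [mul_assoc, ← hv, Units.inv_mul]

/-- Theorem 1 of the paper: backward stability of the Q-R based solution of `M z = f`.
If `‖M - Q̃R̃‖₂ ≤ α ‖M‖₂` with `α κ(M) < 1`, `‖I - Q̃ᵀQ̃‖₂ ≤ β < 1`, and
`(R̃ + ΔR) z̃ = (Q̃ + ΔQ)ᵀ f` with `‖ΔR‖₂ ≤ γ ‖R̃‖₂`, `‖ΔQ‖₂ ≤ δ ‖Q̃‖₂`, then
`(M + ΔM) z̃ = f + Δf` for some `ΔM`, `Δf` with `‖ΔM‖₂ ≤ μ ‖M‖₂`, `‖Δf‖₂ ≤ ν ‖f‖₂`,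
where `μ = α + γ(1+α)√((1+β)/(1-β))` and `ν = β + δ(1+β)`. -/
theorem backward_stability {l : ℕ}
    (M Q R ΔR ΔQ : Matrix (Fin l) (Fin l) ℝ)
    (f z : EuclideanSpace ℝ (Fin l)) (α β γ δ : ℝ)
    (hM : IsUnit M.det)
    (hα : ‖M - Q * R‖ ≤ α * ‖M‖)
    (hκ : α * (‖M⁻¹‖ * ‖M‖) < 1)
    (hβ : ‖(1 : Matrix (Fin l) (Fin l) ℝ) - Qᵀ * Q‖ ≤ β) (hβ1 : β < 1)
    (heq : (R + ΔR) *ᵥ z = (Q + ΔQ)ᵀ *ᵥ f)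
    (hΔR : ‖ΔR‖ ≤ γ * ‖R‖) (hΔQ : ‖ΔQ‖ ≤ δ * ‖Q‖) :
    ∃ (ΔM : Matrix (Fin l) (Fin l) ℝ) (Δf : EuclideanSpace ℝ (Fin l)),
      (M + ΔM) *ᵥ z = f + Δf ∧
      ‖ΔM‖ ≤ (α + γ * (1 + α) * Real.sqrt ((1 + β) / (1 - β))) * ‖M‖ ∧
      ‖Δf‖ ≤ (β + δ * (1 + β)) * ‖f‖ := by
  rcases isEmpty_or_nonempty (Fin l) with hl | hl
  · exact ⟨0, 0, Subsingleton.elim _ _, by simp [Subsingleton.elim M 0],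
      by simp [Subsingleton.elim f 0]⟩
  have hstar (A : Matrix (Fin l) (Fin l) ℝ) : star A = Aᵀ :=
    conjTranspose_eq_transpose_of_trivial A
  obtain ⟨u, rfl⟩ := isUnit_of_norm_one_sub_transpose_mul_self_lt_one (hβ.trans_lt hβ1)
  rw [← hstar] at hβ
  have hα1 : α < 1 := by
    have hκM : 1 ≤ ‖M⁻¹‖ * ‖M‖ := by
      simpa [nonsing_inv_mul M hM] using norm_mul_le M⁻¹ M
    nlinarith
  have hR : R ≠ 0 := by
    rintro rfl
    have hM0 : 0 < ‖M‖ := norm_pos_iff.mpr (by rintro rfl; simp at hM)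
    simp only [mul_zero, sub_zero] at hα
    nlinarith
  have hγ : 0 ≤ γ :=
    nonneg_of_mul_nonneg_left ((norm_nonneg ΔR).trans hΔR) (norm_pos_iff.mpr hR)
  set Q : Matrix (Fin l) (Fin l) ℝ := ↑u
  refine ⟨Q * ΔR - (M - Q * R),
    (EuclideanSpace.equiv (Fin l) ℝ).symm (((Q * Qᵀ - 1) + Q * ΔQᵀ) *ᵥ f),
    mulVec_eq_of_perturbed_qr_solve heq,
    norm_mul_sub_sub_le u hα hΔR hγ (norm_mul_norm_inv_le_sqrt u hβ hβ1), ?_⟩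
  refine (l2_opNorm_mulVec _ f).trans (mul_le_mul_of_nonneg_right ?_ (norm_nonneg f))
  simpa only [hstar] using norm_mul_star_sub_one_add_mul_star_le u hβ hΔQ
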